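/- Let S be a commutative ring, F a formal group law over S, n ≥ 2, and 1 ≤ i ≤ n−1. Then there is a well-defined additive, left-R-linear map ∇ : A → R with ∇(r1 ⊗ r2) = r1·∂'_i(r2) on pure tensors (well-defined since ∂'_i is R^{s_i}-linear), and it satisfies ∇((r ⊗ 1)·ξ') = r for every r ∈ R; i.e. the map r ↦ (r ⊗ 1)·ξ' is a section of ∇, and ∇ is a retraction splitting A off onto a free rank-one summand. -/

import Mathlib

/- Common setup: substitution of multivariate power series, formal group laws,
formal inverses, and the variable–swapping operation. -/

open MvPowerSeries Finsupp

noncomputable section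

variable {S : Type*} [CommRing S]

/-- Substitution of a family of multivariate power series (each intended to have zero
constant coefficient) into a power series in `k` variables.  When every `a j` has zero
constant coefficient, the coefficient of a monomial `m` of the substituted series only
receives contributions from exponents `d` with `d j ≤ deg m`, so the finite sum below
computes the genuine substitution. -/
noncomputable def msubst {k n : ℕ} (a : Fin k → MvPowerSeries (Fin n) S)
    (F : MvPowerSeries (Fin k) S) : MvPowerSeries (Fin n) S :=
  fun m =>
    ∑ d ∈ Finset.Iic (equivFunOnFinite.symm fun _ : Fin k => m.sum fun _ e => e),
      MvPowerSeries.coeff d F * MvPowerSeries.coeff m (∏ j, a j ^ d j)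

/-- `F ∈ S[[x,y]]` is a (one-dimensional, commutative) formal group law over `S`:
zero constant coefficient, commutativity `F(x,y) = F(y,x)`, unitality `F(x,0) = x`,
and associativity `F(F(x,y),z) = F(x,F(y,z))`. -/
def IsFormalGroupLaw (F : MvPowerSeries (Fin 2) S) : Prop :=
  MvPowerSeries.constantCoeff (σ := Fin 2) (R := S) F = 0 ∧
  msubst ![(X 1 : MvPowerSeries (Fin 2) S), X 0] F = F ∧
  msubst ![(X 0 : MvPowerSeries (Fin 2) S), 0] F = X 0 ∧
  msubst ![msubst ![(X 0 : MvPowerSeries (Fin 3) S), X 1] F, X 2] F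
    = msubst ![(X 0 : MvPowerSeries (Fin 3) S), msubst ![(X 1 : MvPowerSeries (Fin 3) S), X 2] F] F

/-- `ι ∈ S[[x]]` is the formal inverse of `F`: it has zero constant coefficient
and `F(x, ι(x)) = 0`. -/
def IsFormalInverse (F : MvPowerSeries (Fin 2) S) (ι : MvPowerSeries (Fin 1) S) : Prop :=
  MvPowerSeries.constantCoeff (σ := Fin 1) (R := S) ι = 0 ∧
  msubst ![(X 0 : MvPowerSeries (Fin 1) S), ι] F = 0

/-- `ι(b)`, the substitution of `b` into the formal inverse `ι`. -/
noncomputable def fneg (ι : MvPowerSeries (Fin 1) S) {n : ℕ}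
    (b : MvPowerSeries (Fin n) S) : MvPowerSeries (Fin n) S :=
  msubst ![b] ι

/-- `a −_F b := F(a, ι(b))`. -/
noncomputable def fsub (F : MvPowerSeries (Fin 2) S) (ι : MvPowerSeries (Fin 1) S) {n : ℕ}
    (a b : MvPowerSeries (Fin n) S) : MvPowerSeries (Fin n) S :=
  msubst ![a, fneg ι b] F

/-- Substitution `g(a,b)` of two power series into a two-variable power series `g`. -/
noncomputable def gsub (g : MvPowerSeries (Fin 2) S) {n : ℕ}
    (a b : MvPowerSeries (Fin n) S) : MvPowerSeries (Fin n) S :=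
  msubst ![a, b] g

/-- The map on multivariate power series interchanging the variables `x_i` and `x_j`
(the renaming along the transposition `(i,j)`). -/
def swapVars {n : ℕ} (i j : Fin n) (f : MvPowerSeries (Fin n) S) :
    MvPowerSeries (Fin n) S :=
  fun m => f (equivMapDomain (Equiv.swap i j) m)

theorem swapVars_coeff {n : ℕ} (i j : Fin n) (f : MvPowerSeries (Fin n) S) (m : Fin n →₀ ℕ) :
    MvPowerSeries.coeff m (swapVars i j f)
      = MvPowerSeries.coeff (equivMapDomain (Equiv.swap i j) m) f := rfl

theorem equivMapDomain_swap_invol {n : ℕ} (i j : Fin n) (m : Fin n →₀ ℕ) :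
    equivMapDomain (Equiv.swap i j) (equivMapDomain (Equiv.swap i j) m) = m := by
  rw [← equivMapDomain_trans, Equiv.swap_swap, equivMapDomain_refl]

theorem equivMapDomain_add' {n : ℕ} (e : Fin n ≃ Fin n) (a b : Fin n →₀ ℕ) :
    equivMapDomain e (a + b) = equivMapDomain e a + equivMapDomain e b := by
  ext x; simp [equivMapDomain_apply]

theorem swapVars_add {n : ℕ} (i j : Fin n) (f h : MvPowerSeries (Fin n) S) :
    swapVars i j (f + h) = swapVars i j f + swapVars i j h := rfl

theorem swapVars_mul {n : ℕ} (i j : Fin n) (f h : MvPowerSeries (Fin n) S) :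
    swapVars i j (f * h) = swapVars i j f * swapVars i j h := by
  ext m
  rw [swapVars_coeff, MvPowerSeries.coeff_mul, MvPowerSeries.coeff_mul]
  refine Finset.sum_nbij'
    (fun p => (equivMapDomain (Equiv.swap i j) p.1, equivMapDomain (Equiv.swap i j) p.2))
    (fun p => (equivMapDomain (Equiv.swap i j) p.1, equivMapDomain (Equiv.swap i j) p.2))
    ?_ ?_ ?_ ?_ ?_
  · intro p hp
    rw [Finset.HasAntidiagonal.mem_antidiagonal] at hp ⊢
    rw [← equivMapDomain_add', hp, equivMapDomain_swap_invol]
  · intro p hp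
    rw [Finset.HasAntidiagonal.mem_antidiagonal] at hp ⊢
    rw [← equivMapDomain_add', hp]
  · intro p _; simp [equivMapDomain_swap_invol]
  · intro p _; simp [equivMapDomain_swap_invol]
  · intro p _
    rw [swapVars_coeff, swapVars_coeff, equivMapDomain_swap_invol, equivMapDomain_swap_invol]

theorem swapVars_C {n : ℕ} (i j : Fin n) (s : S) :
    swapVars i j (MvPowerSeries.C (σ := Fin n) (R := S) s) = MvPowerSeries.C (σ := Fin n) (R := S) s := by
  ext m
  rw [swapVars_coeff, MvPowerSeries.coeff_C, MvPowerSeries.coeff_C]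
  by_cases hm : m = 0
  · subst hm; rw [equivMapDomain_zero]
  · rw [if_neg, if_neg hm]
    intro hc
    apply hm
    have := congrArg (equivMapDomain (Equiv.swap i j)) hc
    rwa [equivMapDomain_swap_invol, equivMapDomain_zero] at this

theorem swapVars_one {n : ℕ} (i j : Fin n) :
    swapVars i j (1 : MvPowerSeries (Fin n) S) = 1 := by
  have := swapVars_C (S := S) i j 1
  rwa [map_one] at this

/-- The fixed subalgebra `R^{s_i}` of power series invariant under interchanging
the variables `x_i` and `x_j`. -/
noncomputable def fixedSubalgebra (S : Type*) [CommRing S] {n : ℕ} (i j : Fin n) :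
    Subalgebra S (MvPowerSeries (Fin n) S) where
  carrier := {f | swapVars i j f = f}
  mul_mem' := by
    intro a b ha hb
    simp only [Set.mem_setOf_eq] at *
    rw [swapVars_mul, ha, hb]
  add_mem' := by
    intro a b ha hb
    simp only [Set.mem_setOf_eq] at *
    rw [swapVars_add, ha, hb]
  algebraMap_mem' := fun s => swapVars_C i j s

/-- `s_i` as an algebra homomorphism over the fixed subalgebra. -/
noncomputable def swapAlgHom (S : Type*) [CommRing S] {n : ℕ} (i j : Fin n) :
    MvPowerSeries (Fin n) S →ₐ[fixedSubalgebra S i j] MvPowerSeries (Fin n) S where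
  toFun := swapVars i j
  map_one' := swapVars_one i j
  map_mul' := swapVars_mul i j
  map_zero' := rfl
  map_add' := swapVars_add i j
  commutes' := fun r => r.2

open TensorProduct in
/-- The elementary Bott–Samelson bimodule `A = R ⊗_{R^{s_i}} R`. -/
noncomputable abbrev BSB (S : Type*) [CommRing S] {n : ℕ} (i j : Fin n) : Type _ :=
  (MvPowerSeries (Fin n) S) ⊗[fixedSubalgebra S i j] (MvPowerSeries (Fin n) S)

/-- The multiplication map `μ : A → R`, `r1 ⊗ r2 ↦ r1·r2`. -/
noncomputable def mulHom (S : Type*) [CommRing S] {n : ℕ} (i j : Fin n) :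
    BSB S i j →ₐ[fixedSubalgebra S i j] MvPowerSeries (Fin n) S :=
  Algebra.TensorProduct.productMap (AlgHom.id _ _) (AlgHom.id _ _)

/-- The twisted multiplication map `μ_s : A → R`, `r1 ⊗ r2 ↦ r1·s_i(r2)`. -/
noncomputable def mulsHom (S : Type*) [CommRing S] {n : ℕ} (i j : Fin n) :
    BSB S i j →ₐ[fixedSubalgebra S i j] MvPowerSeries (Fin n) S :=
  Algebra.TensorProduct.productMap (AlgHom.id _ _) (swapAlgHom S i j)

open TensorProduct in
/-- The element `ξ = x_i⊗1 −_F 1⊗x_{i+1} := (g(x_i,x_j)⁻¹ ⊗ 1)·(1 ⊗ x_i − x_j ⊗ 1)` of `A`. -/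
noncomputable def xiElt (g : MvPowerSeries (Fin 2) S) {n : ℕ} (i j : Fin n) : BSB S i j :=
  (Ring.inverse (gsub g (X i) (X j)) ⊗ₜ[fixedSubalgebra S i j] (1 : MvPowerSeries (Fin n) S)) *
    ((1 : MvPowerSeries (Fin n) S) ⊗ₜ[fixedSubalgebra S i j] (X i)
      - (X j) ⊗ₜ[fixedSubalgebra S i j] (1 : MvPowerSeries (Fin n) S))

open TensorProduct in
/-- The element `ξ' = x_{i+1}⊗1 −_F 1⊗x_{i+1} := (g(x_j,x_i)⁻¹ ⊗ 1)·(1 ⊗ x_i − x_i ⊗ 1)` of `A`. -/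
noncomputable def xiElt' (g : MvPowerSeries (Fin 2) S) {n : ℕ} (i j : Fin n) : BSB S i j :=
  (Ring.inverse (gsub g (X j) (X i)) ⊗ₜ[fixedSubalgebra S i j] (1 : MvPowerSeries (Fin n) S)) *
    ((1 : MvPowerSeries (Fin n) S) ⊗ₜ[fixedSubalgebra S i j] (X i)
      - (X i) ⊗ₜ[fixedSubalgebra S i j] (1 : MvPowerSeries (Fin n) S))

open TensorProduct

/-! Substituting `(x_j, x_i)` into `x - y = (x -_F y)·g(x, y)` gives
`x_j - x_i = φ·g(x_j, x_i)` with `φ = x_j -_F x_i`, and since `x_j - x_i` is a non-zero-divisor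
so is `φ`. Cancelling `φ` in `φ·∂'(f) = s_i(f) - f` shows that `∂'` is `R^{s_i}`-linear, that
`∂'(1) = 0` and that `∂'(x_i) = g(x_j, x_i)`. Hence `r₁ ⊗ r₂ ↦ r₁·∂'(r₂)` is well defined, and it
sends `(r ⊗ 1)·ξ' = r·g(x_j, x_i)⁻¹ ⊗ x_i - r·g(x_j, x_i)⁻¹·x_i ⊗ 1` to `r`. -/

section Substitution

variable {S : Type*} [CommRing S]

theorem coeff_prod_pow_eq_zero_of_degree_lt {k n : ℕ} {a : Fin k → MvPowerSeries (Fin n) S}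
    (ha : ∀ t, constantCoeff (a t) = 0) {d : Fin k → ℕ} {m : Fin n →₀ ℕ}
    (hm : degree m < ∑ t, d t) : coeff m (∏ t, a t ^ d t) = 0 := by
  refine coeff_of_lt_order (lt_of_lt_of_le ?_ (le_order_prod _ _))
  calc ((degree m : ℕ) : ℕ∞) < ∑ t, (d t : ℕ∞) := by exact_mod_cast hm
    _ ≤ ∑ t, (a t ^ d t).order :=
      Finset.sum_le_sum fun t _ => le_order_pow_of_constantCoeff_eq_zero _ (ha t)

theorem msubst_eq_subst {k n : ℕ} {a : Fin k → MvPowerSeries (Fin n) S}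
    (ha : ∀ t, constantCoeff (a t) = 0) (f : MvPowerSeries (Fin k) S) :
    msubst a f = subst a f := by
  have hprod (d : Fin k →₀ ℕ) : (d.prod fun t e => a t ^ e) = ∏ t, a t ^ d t :=
    Finsupp.prod_fintype _ _ fun _ => pow_zero _
  ext m
  rw [coeff_subst (hasSubst_of_constantCoeff_zero ha), finsum_eq_sum_of_support_subset
    (s := Finset.Iic (equivFunOnFinite.symm fun _ : Fin k => degree m))]
  · exact Finset.sum_congr rfl fun d _ => by rw [smul_eq_mul, hprod]
  · intro d hd
    by_contra hdm
    obtain ⟨t, ht⟩ : ∃ t, degree m < d t := by simpa [Finsupp.le_def] using hdm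
    refine hd ?_
    dsimp only
    rw [smul_eq_mul, hprod, coeff_prod_pow_eq_zero_of_degree_lt ha, mul_zero]
    exact ht.trans_le (Finset.single_le_sum (fun _ _ => Nat.zero_le _) (Finset.mem_univ t))

end Substitution

section FormalGroupLaw

variable {S : Type*} [CommRing S] {n : ℕ} {a b : MvPowerSeries (Fin n) S}

theorem hasSubst_single (hb : constantCoeff b = 0) : HasSubst ![b] :=
  hasSubst_of_constantCoeff_zero fun t => by fin_cases t; exact hb

theorem hasSubst_pair (ha : constantCoeff a = 0) (hb : constantCoeff b = 0) : HasSubst ![a, b] :=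
  hasSubst_of_constantCoeff_zero (Fin.forall_fin_two.2 ⟨ha, hb⟩)

theorem fneg_eq_subst (ι : MvPowerSeries (Fin 1) S) (hb : constantCoeff b = 0) :
    fneg ι b = subst ![b] ι :=
  msubst_eq_subst (fun t => by fin_cases t; exact hb) ι

theorem constantCoeff_fneg {ι : MvPowerSeries (Fin 1) S} (hι : constantCoeff ι = 0)
    (hb : constantCoeff b = 0) : constantCoeff (fneg ι b) = 0 := by
  rw [fneg_eq_subst ι hb]
  exact constantCoeff_subst_eq_zero (hasSubst_single hb) (fun t => by fin_cases t; exact hb) hι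

theorem fsub_eq_subst (F : MvPowerSeries (Fin 2) S) {ι : MvPowerSeries (Fin 1) S}
    (hι : constantCoeff ι = 0) (ha : constantCoeff a = 0) (hb : constantCoeff b = 0) :
    fsub F ι a b = subst ![a, subst ![b] ι] F := by
  rw [fsub, msubst_eq_subst (Fin.forall_fin_two.2 ⟨ha, constantCoeff_fneg hι hb⟩),
    fneg_eq_subst ι hb]

theorem fsub_eq_subst_fsub_X (F : MvPowerSeries (Fin 2) S) {ι : MvPowerSeries (Fin 1) S}
    (hι : constantCoeff ι = 0) (ha : constantCoeff a = 0) (hb : constantCoeff b = 0) :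
    fsub F ι a b = subst ![a, b] (fsub F ι (X 0) (X 1)) := by
  have hX (t : Fin 2) : constantCoeff (X t : MvPowerSeries (Fin 2) S) = 0 := constantCoeff_X t
  have hab := hasSubst_pair ha hb
  have hXι : HasSubst ![(X 0 : MvPowerSeries (Fin 2) S), subst ![X 1] ι] := by
    rw [← fneg_eq_subst ι (hX 1)]
    exact hasSubst_pair (hX 0) (constantCoeff_fneg hι (hX 1))
  rw [fsub_eq_subst F hι ha hb, fsub_eq_subst F hι (hX 0) (hX 1), subst_comp_subst_apply hXι hab]
  congr 1
  funext t
  fin_cases t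
  · exact (subst_X hab 0).symm
  · show subst ![b] ι = subst ![a, b] (subst ![X 1] ι)
    rw [subst_comp_subst_apply (hasSubst_single (hX 1)) hab]
    congr 1
    funext s
    fin_cases s
    exact (subst_X hab 1).symm

theorem gsub_eq_subst (g : MvPowerSeries (Fin 2) S) (ha : constantCoeff a = 0)
    (hb : constantCoeff b = 0) : gsub g a b = subst ![a, b] g :=
  msubst_eq_subst (Fin.forall_fin_two.2 ⟨ha, hb⟩) g

theorem sub_eq_fsub_mul_gsub {F g : MvPowerSeries (Fin 2) S} {ι : MvPowerSeries (Fin 1) S}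
    (hι : constantCoeff ι = 0)
    (hg : (X 0 : MvPowerSeries (Fin 2) S) - X 1 = fsub F ι (X 0) (X 1) * g)
    (ha : constantCoeff a = 0) (hb : constantCoeff b = 0) :
    a - b = fsub F ι a b * gsub g a b := by
  have hab := hasSubst_pair ha hb
  have h := congrArg (subst ![a, b]) hg
  rwa [subst_sub hab, subst_mul hab, subst_X hab, subst_X hab, ← fsub_eq_subst_fsub_X F hι ha hb,
    ← gsub_eq_subst g ha hb] at h

theorem isUnit_gsub {g : MvPowerSeries (Fin 2) S} (hg : IsUnit g) (ha : constantCoeff a = 0)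
    (hb : constantCoeff b = 0) : IsUnit (gsub g a b) := by
  rw [gsub_eq_subst g ha hb, ← coe_substAlgHom (hasSubst_pair ha hb)]
  exact hg.map _

end FormalGroupLaw

section Regular

variable {σ S : Type*} [CommRing S]

theorem coeff_single_add_X_mul (s : σ) (f : MvPowerSeries σ S) (m : σ →₀ ℕ) :
    coeff (single s 1 + m) (X s * f) = coeff m f := by
  rw [X_def, coeff_add_monomial_mul, one_mul]

theorem eq_zero_of_X_mul_eq_X_mul {s t : σ} (hst : s ≠ t) {f : MvPowerSeries σ S}
    (h : X t * f = X s * f) : f = 0 := by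
  classical
  suffices ∀ (N : ℕ) (m : σ →₀ ℕ), m s = N → coeff m f = 0 by
    ext m; exact this _ m rfl
  intro N
  induction N with
  | zero =>
    intro m hm
    rw [← coeff_single_add_X_mul t, h, X_def, coeff_monomial_mul, if_neg]
    simp [Finsupp.single_le_iff, hst, hm]
  | succ N ih =>
    intro m hm
    obtain ⟨m, rfl⟩ : ∃ m', m = single s 1 + m' :=
      ⟨m - single s 1, (add_tsub_cancel_of_le (by simp [Finsupp.single_le_iff, hm])).symm⟩
    rw [← coeff_single_add_X_mul t, h, add_left_comm, coeff_single_add_X_mul]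
    apply ih
    simp only [Finsupp.add_apply, Finsupp.single_apply, if_pos, if_neg hst.symm] at hm ⊢
    omega

theorem isLeftRegular_X_sub_X {s t : σ} (hst : s ≠ t) :
    IsLeftRegular (X t - X s : MvPowerSeries σ S) := by
  refine (isLeftRegular_iff_right_eq_zero_of_mul).2 fun f hf => ?_
  exact eq_zero_of_X_mul_eq_X_mul hst (sub_eq_zero.1 (by rwa [← sub_mul]))

end Regular

theorem swapVars_X_left {S : Type*} [CommRing S] {n : ℕ} (i j : Fin n) :
    swapVars i j (X i : MvPowerSeries (Fin n) S) = X j := by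
  classical
  have hi : single i 1 = equivCongrLeft (Equiv.swap i j) (single j 1) := by
    rw [equivCongrLeft_apply, equivMapDomain_single, Equiv.swap_apply_right]
  ext m
  rw [swapVars_coeff, coeff_X, coeff_X, hi, ← equivCongrLeft_apply]
  simp only [(equivCongrLeft (Equiv.swap i j)).injective.eq_iff]

section DemazureOperator

variable {K R : Type*} [CommRing K] [CommRing R] [Algebra K R] {s : R →ₐ[K] R} {φ : R}
  {D : R → R}

theorem demazure_eq (hφ : IsLeftRegular φ) (hD : ∀ f, φ * D f = s f - f) {x y : R}
    (h : s x - x = φ * y) : D x = y :=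
  hφ ((hD x).trans h)

theorem demazure_one (hφ : IsLeftRegular φ) (hD : ∀ f, φ * D f = s f - f) : D 1 = 0 :=
  demazure_eq hφ hD (by rw [map_one, sub_self, mul_zero])

def demazureLinearMap (hφ : IsLeftRegular φ) (hD : ∀ f, φ * D f = s f - f) : R →ₗ[K] R where
  toFun := D
  map_add' f f' := demazure_eq hφ hD (by rw [map_add, mul_add, hD, hD]; ring)
  map_smul' c f := demazure_eq hφ hD (by
    rw [RingHom.id_apply, Algebra.smul_def, Algebra.smul_def, map_mul, AlgHom.commutes,
      mul_left_comm, hD]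
    ring)

def nabla (hφ : IsLeftRegular φ) (hD : ∀ f, φ * D f = s f - f) : R ⊗[K] R →ₗ[R] R :=
  AlgebraTensorModule.lift (LinearMap.toSpanSingleton R _ (demazureLinearMap hφ hD))

theorem nabla_tmul (hφ : IsLeftRegular φ) (hD : ∀ f, φ * D f = s f - f) (r₁ r₂ : R) :
    nabla hφ hD (r₁ ⊗ₜ r₂) = r₁ * D r₂ :=
  rfl

theorem nabla_tmul_one_mul_eq_self (hφ : IsLeftRegular φ) (hD : ∀ f, φ * D f = s f - f)
    {u x : R} (hu : u * D x = 1) (r : R) :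
    nabla hφ hD ((r ⊗ₜ 1) * ((u ⊗ₜ 1) * (1 ⊗ₜ x - x ⊗ₜ 1))) = r := by
  simp only [mul_sub, Algebra.TensorProduct.tmul_mul_tmul, map_sub, nabla_tmul, one_mul, mul_one,
    demazure_one hφ hD]
  linear_combination r * hu

end DemazureOperator

theorem exists_nabla_retraction_general
    (F : MvPowerSeries (Fin 2) S)
    (ι : MvPowerSeries (Fin 1) S) (hι : IsFormalInverse F ι)
    (g : MvPowerSeries (Fin 2) S)
    (hg : (X 0 : MvPowerSeries (Fin 2) S) - X 1 = fsub F ι (X 0) (X 1) * g)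
    (hgu : IsUnit g)
    {n : ℕ} (i j : Fin n) (hij : (i : ℕ) + 1 = (j : ℕ))
    (Dem' : MvPowerSeries (Fin n) S → MvPowerSeries (Fin n) S)
    (hDem' : ∀ f, fsub F ι (X j : MvPowerSeries (Fin n) S) (X i) * Dem' f
                    = swapVars i j f - f) :
    ∃ Nabla : BSB S i j →ₗ[MvPowerSeries (Fin n) S] MvPowerSeries (Fin n) S,
      (∀ r1 r2 : MvPowerSeries (Fin n) S,
          Nabla (r1 ⊗ₜ[fixedSubalgebra S i j] r2) = r1 * Dem' r2) ∧
      (∀ r : MvPowerSeries (Fin n) S,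
          Nabla ((r ⊗ₜ[fixedSubalgebra S i j] (1 : MvPowerSeries (Fin n) S))
            * xiElt' g i j) = r) := by
  have hX (t : Fin n) : constantCoeff (X t : MvPowerSeries (Fin n) S) = 0 := constantCoeff_X t
  have hsub := sub_eq_fsub_mul_gsub hι.1 hg (hX j) (hX i)
  have hφ : IsLeftRegular (fsub F ι (X j : MvPowerSeries (Fin n) S) (X i)) := by
    have h := isLeftRegular_X_sub_X (S := S) (Fin.ne_of_val_ne (by omega : (i : ℕ) ≠ j))
    rw [hsub, mul_comm] at h
    exact h.of_mul
  have hD : ∀ f, fsub F ι (X j) (X i) * Dem' f = swapAlgHom S i j f - f := hDem'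
  have hDX : Dem' (X i) = gsub g (X j) (X i) :=
    demazure_eq hφ hD (show swapVars i j (X i) - X i = _ by rw [swapVars_X_left, hsub])
  refine ⟨nabla hφ hD, nabla_tmul hφ hD, nabla_tmul_one_mul_eq_self hφ hD ?_⟩
  rw [hDX]
  exact Ring.inverse_mul_cancel _ (isUnit_gsub hgu (hX j) (hX i))

/-- there is a left-`R`-linear map `∇ : A → R` with
`∇(r1 ⊗ r2) = r1·∂'_i(r2)`, and `∇((r ⊗ 1)·ξ') = r`, so `r ↦ (r ⊗ 1)·ξ'` is a section
of `∇`. -/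
theorem exists_nabla_retraction
    (F : MvPowerSeries (Fin 2) S) (hF : IsFormalGroupLaw F)
    (ι : MvPowerSeries (Fin 1) S) (hι : IsFormalInverse F ι)
    (g : MvPowerSeries (Fin 2) S)
    (hg : (X 0 : MvPowerSeries (Fin 2) S) - X 1 = fsub F ι (X 0) (X 1) * g)
    (hgu : IsUnit g)
    {n : ℕ} (i j : Fin n) (hij : (i : ℕ) + 1 = (j : ℕ))
    (Dem' : MvPowerSeries (Fin n) S → MvPowerSeries (Fin n) S)
    (hDem' : ∀ f, fsub F ι (X j : MvPowerSeries (Fin n) S) (X i) * Dem' f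
                    = swapVars i j f - f) :
    ∃ Nabla : BSB S i j →ₗ[MvPowerSeries (Fin n) S] MvPowerSeries (Fin n) S,
      (∀ r1 r2 : MvPowerSeries (Fin n) S,
          Nabla (r1 ⊗ₜ[fixedSubalgebra S i j] r2) = r1 * Dem' r2) ∧
      (∀ r : MvPowerSeries (Fin n) S,
          Nabla ((r ⊗ₜ[fixedSubalgebra S i j] (1 : MvPowerSeries (Fin n) S))
            * xiElt' g i j) = r) :=
  exists_nabla_retraction_general F ι hι g hg hgu i j hij Dem' hDem'
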